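/- arXiv:1710.07089 — 3 statements merged into one kernel-verified Lean document; each statement's English description precedes it below -/
import Mathlib

section
/- Let B be a finite bipartite graph with parts S' and V, f : S' → ℤ≥2, and suppose F₀ is a forest subgraph of B with d_{F₀}(x') ≥ f(x')+1 for all x' ∈ S'. Suppose further there is an injection u ↦ u' from a set S ⊆ V to S' such that every 'vertical' pair u'u is an edge of B. Then there exists a forest subgraph F₁ of B containing all vertical edges u'u (u ∈ S) such that d_{F₁}(x') ≥ f(x')+1 for every x' ∈ S'. -/
/-!
Add the vertical edges one at a time. To add an edge `xy` of `B` to a forest `F` with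
`x = ι u ∈ S'`: if `x` and `y` lie in different components, simply add it; otherwise the
`F`-path from `x` to `y` starts with an edge `xz`, and exchanging `xz` for `xy` keeps a forest
and the degree of `x`. Only `z`, a vertex of `V` by bipartiteness, loses an edge, and `xz` is not
one of the vertical edges placed before because `ι` is injective.
-/

open Sum

namespace SimpleGraph

variable {V : Type*} {F : SimpleGraph V} {x y : V}

theorem IsAcyclic.exists_adj_isAcyclic_deleteEdges_sup_edge (hF : F.IsAcyclic)
    (hreach : F.Reachable x y) (hxy : x ≠ y) :
    ∃ z, F.Adj x z ∧ (F.deleteEdges {s(x, z)} ⊔ edge x y).IsAcyclic := by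
  classical
  obtain ⟨p, hp⟩ := hreach.some.toPath
  cases p with
  | nil => exact absurd rfl hxy
  | @cons _ z _ hxz q =>
    refine ⟨z, hxz, (hF.anti (deleteEdges_le _)).sup_edge_of_not_reachable fun hxy' => ?_⟩
    -- the tail `q` avoids `x`, so `z` and `y` stay connected without the edge `xz`
    have hxq : s(x, z) ∉ q.edges := fun h =>
      ((Walk.cons_isPath_iff _ _).1 hp).2 (q.fst_mem_support_of_mem_edges h)
    exact isAcyclic_iff_forall_adj_isBridge.1 hF hxz
      (hxy'.trans ⟨(q.toDeleteEdge _ hxq).reverse⟩)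

theorem IsAcyclic.exists_isAcyclic_adj_le_sup_edge [Finite V] (hF : F.IsAcyclic) (hxy : x ≠ y) :
    ∃ F' : SimpleGraph V, F' ≤ F ⊔ edge x y ∧ F'.IsAcyclic ∧ F'.Adj x y ∧
      F.deleteIncidenceSet x ≤ F' ∧ Nat.card (F.neighborSet x) ≤ Nat.card (F'.neighborSet x) := by
  have hedge : (edge x y).Adj x y := (edge_adj x y x y).2 ⟨.inl ⟨rfl, rfl⟩, hxy⟩
  by_cases hadj : F.Adj x y
  · exact ⟨F, le_sup_left, hF, hadj, deleteIncidenceSet_le _ _, le_rfl⟩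
  by_cases hreach : F.Reachable x y
  swap
  · exact ⟨F ⊔ edge x y, le_rfl, hF.sup_edge_of_not_reachable hreach, .inr hedge,
      (deleteIncidenceSet_le _ _).trans le_sup_left,
      Nat.card_mono (Set.toFinite _) (neighborSet_mono le_sup_left x)⟩
  obtain ⟨z, hxz, hacyc⟩ := hF.exists_adj_isAcyclic_deleteEdges_sup_edge hreach hxy
  refine ⟨F.deleteEdges {s(x, z)} ⊔ edge x y, sup_le_sup_right (deleteEdges_le _) _, hacyc,
    .inr hedge, le_sup_of_le_left (deleteEdges_anti ?_), ?_⟩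
  · simpa using hxz
  have hsub : insert y (F.neighborSet x \ {z}) ⊆
      (F.deleteEdges {s(x, z)} ⊔ edge x y).neighborSet x := by
    rintro w (rfl | ⟨hw, hwz⟩)
    · exact .inr hedge
    · exact .inl (deleteEdges_adj.2 ⟨hw, fun h => hwz (Sym2.congr_right.1 h)⟩)
  calc Nat.card (F.neighborSet x)
      = Nat.card (insert y (F.neighborSet x \ {z}) : Set V) := by
        simp only [Nat.card_coe_set_eq]
        rw [Set.ncard_insert_of_notMem (fun h => hadj h.1),
          Set.ncard_sdiff_singleton_add_one (show z ∈ F.neighborSet x from hxz)]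
    _ ≤ _ := Nat.card_mono (Set.toFinite _) hsub

section Bipartite

variable {α β : Type*} {B F : SimpleGraph (α ⊕ β)}

theorem exists_isAcyclic_adj_inl_inr [Finite α] [Finite β]
    (hleft : ∀ a b, ¬ B.Adj (inl a) (inl b)) (hFB : F ≤ B) (hF : F.IsAcyclic) {a : α} {b : β}
    (hab : B.Adj (inl a) (inr b)) :
    ∃ F' ≤ B, F'.IsAcyclic ∧ F'.Adj (inl a) (inr b) ∧ F.deleteIncidenceSet (inl a) ≤ F' ∧
      ∀ c, Nat.card (F.neighborSet (inl c)) ≤ Nat.card (F'.neighborSet (inl c)) := by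
  obtain ⟨F', hF'le, hF', hadj, hkeep, hdeg⟩ := hF.exists_isAcyclic_adj_le_sup_edge hab.ne
  refine ⟨F', hF'le.trans (sup_le hFB ((edge_le_iff _).2 (.inr hab))), hF', hadj, hkeep,
    fun c => ?_⟩
  obtain rfl | hca := eq_or_ne c a
  · exact hdeg
  refine Nat.card_mono (Set.toFinite _) fun w hw => hkeep ?_
  exact deleteIncidenceSet_adj.2 ⟨hw, by simpa using hca, fun h => hleft c a (hFB (h ▸ hw))⟩

theorem exists_isAcyclic_forall_adj_inl_inr [Finite α] [Finite β]
    (hleft : ∀ a b, ¬ B.Adj (inl a) (inl b)) {F₀ : SimpleGraph (α ⊕ β)} (hF₀B : F₀ ≤ B)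
    (hF₀ : F₀.IsAcyclic) {S : Set β} {ι : β → α} (hι : S.InjOn ι)
    (hvert : ∀ u ∈ S, B.Adj (inl (ι u)) (inr u)) :
    ∃ F ≤ B, F.IsAcyclic ∧ (∀ u ∈ S, F.Adj (inl (ι u)) (inr u)) ∧
      ∀ a, Nat.card (F₀.neighborSet (inl a)) ≤ Nat.card (F.neighborSet (inl a)) := by
  refine S.toFinite.induction_on_subset (motive := fun T _ => ∃ F ≤ B, F.IsAcyclic ∧
      (∀ u ∈ T, F.Adj (inl (ι u)) (inr u)) ∧
      ∀ a, Nat.card (F₀.neighborSet (inl a)) ≤ Nat.card (F.neighborSet (inl a))) S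
    ⟨F₀, hF₀B, hF₀, by simp, fun _ => le_rfl⟩ ?_
  rintro u T huS hTS huT ⟨F, hFB, hF, hFvert, hFdeg⟩
  obtain ⟨F', hF'B, hF', hu, hkeep, hdeg⟩ :=
    exists_isAcyclic_adj_inl_inr hleft hFB hF (hvert u huS)
  refine ⟨F', hF'B, hF', ?_, fun a => (hFdeg a).trans (hdeg a)⟩
  rintro v (rfl | hvT)
  · exact hu
  have hιv : ι v ≠ ι u := fun h => huT (hι (hTS hvT) huS h ▸ hvT)
  exact hkeep (deleteIncidenceSet_adj.2 ⟨hFvert v hvT, by simpa using hιv, inr_ne_inl⟩)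

end Bipartite

end SimpleGraph

theorem forest_contains_vertical_edges_general
    {α β : Type*} [Fintype α] [Fintype β]
    (B : SimpleGraph (α ⊕ β))
    (hbip : ∀ x y, B.Adj x y → (x.isLeft ∧ y.isRight) ∨ (x.isRight ∧ y.isLeft))
    (f : α → ℤ)
    (S : Set β) (ι : β → α) (hι : Set.InjOn ι S)
    (hvert : ∀ u ∈ S, B.Adj (Sum.inl (ι u)) (Sum.inr u))
    (F₀ : SimpleGraph (α ⊕ β)) (hF₀le : F₀ ≤ B) (hF₀ac : F₀.IsAcyclic)
    (hF₀deg : ∀ a : α, f a + 1 ≤ (Nat.card (F₀.neighborSet (Sum.inl a)) : ℤ)) :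
    ∃ F₁ : SimpleGraph (α ⊕ β), F₁ ≤ B ∧ F₁.IsAcyclic ∧
      (∀ u ∈ S, F₁.Adj (Sum.inl (ι u)) (Sum.inr u)) ∧
      ∀ a : α, f a + 1 ≤ (Nat.card (F₁.neighborSet (Sum.inl a)) : ℤ) := by
  have hleft : ∀ a b, ¬ B.Adj (inl a) (inl b) := fun a b h => by simpa using hbip _ _ h
  obtain ⟨F₁, hF₁B, hF₁, hF₁vert, hF₁deg⟩ :=
    SimpleGraph.exists_isAcyclic_forall_adj_inl_inr hleft hF₀le hF₀ac hι hvert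
  exact ⟨F₁, hF₁B, hF₁, hF₁vert, fun a => (hF₀deg a).trans (by exact_mod_cast hF₁deg a)⟩

/-- Modifying a forest subgraph of a bipartite graph to contain all "vertical"
edges `u'u` (for `u` in `S ⊆ V`, `u' = ι u ∈ S'`) while keeping the degree
lower bounds `f + 1` on `S'`. -/
theorem forest_contains_vertical_edges
    {α β : Type*} [Fintype α] [Fintype β]
    (B : SimpleGraph (α ⊕ β))
    (hbip : ∀ x y, B.Adj x y → (x.isLeft ∧ y.isRight) ∨ (x.isRight ∧ y.isLeft))
    (f : α → ℤ) (hf : ∀ a, 2 ≤ f a)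
    (S : Set β) (ι : β → α) (hι : Set.InjOn ι S)
    (hvert : ∀ u ∈ S, B.Adj (Sum.inl (ι u)) (Sum.inr u))
    (F₀ : SimpleGraph (α ⊕ β)) (hF₀le : F₀ ≤ B) (hF₀ac : F₀.IsAcyclic)
    (hF₀deg : ∀ a : α, f a + 1 ≤ (Nat.card (F₀.neighborSet (Sum.inl a)) : ℤ)) :
    ∃ F₁ : SimpleGraph (α ⊕ β), F₁ ≤ B ∧ F₁.IsAcyclic ∧
      (∀ u ∈ S, F₁.Adj (Sum.inl (ι u)) (Sum.inr u)) ∧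
      ∀ a : α, f a + 1 ≤ (Nat.card (F₁.neighborSet (Sum.inl a)) : ℤ) :=
  forest_contains_vertical_edges_general B hbip f S ι hι hvert F₀ hF₀le hF₀ac hF₀deg
end

section
/- Let G be a finite simple graph, S ⊆ V(G) with G[S] a cograph, f : S → ℤ≥2, b(X) = |Γ_G(X)| − c_{G[S]}(X) + 2|X| − f(X), and assume b(X) ≥ 1 for all nonempty X ⊆ S. If A and B are disjoint tight sets (b(A) = b(B) = 1) and either U(A,B) ≠ ∅ or some edge of G connects A to B, then A∪B is tight; moreover either |U(A,B)| = 1 and no edge connects A to B, or U(A,B) = ∅. -/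
/-- A cograph: a graph with no induced path on four vertices. -/
def IsCograph {V : Type*} (G : SimpleGraph V) : Prop :=
  ∀ a b c d : V, a ≠ b → a ≠ c → a ≠ d → b ≠ c → b ≠ d → c ≠ d →
    ¬ (G.Adj a b ∧ G.Adj b c ∧ G.Adj c d ∧ ¬G.Adj a c ∧ ¬G.Adj a d ∧ ¬G.Adj b d)

/-- The open neighborhood of a finite vertex set `X` in `G`. -/
def openNbhd {V : Type*} (G : SimpleGraph V) (X : Finset V) : Set V :=
  {v : V | v ∉ X ∧ ∃ x ∈ X, G.Adj x v}

/-- Number of connected components of the subgraph induced by `X`. -/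
noncomputable def numComponents {V : Type*} (G : SimpleGraph V) (X : Finset V) : ℕ :=
  Nat.card (G.induce (X : Set V)).ConnectedComponent

/-- `b(X) = |Γ_G(X)| − c(G[X]) + 2|X| − f(X)`. -/
noncomputable def bFun {V : Type*} (G : SimpleGraph V) (f : V → ℤ) (X : Finset V) : ℤ :=
  (Nat.card (openNbhd G X) : ℤ) - numComponents G X + 2 * X.card - ∑ x ∈ X, f x

/-- `U(A,B)`: vertices outside `A ∪ B` adjacent to both `A \ B` and `B \ A`
but not to `A ∩ B`. -/
def Uset {V : Type*} [DecidableEq V] (G : SimpleGraph V) (A B : Finset V) : Set V :=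
  {w : V | w ∉ A ∪ B ∧ (∃ a ∈ A \ B, G.Adj a w) ∧ (∃ b ∈ B \ A, G.Adj b w) ∧
    ¬ ∃ c ∈ A ∩ B, G.Adj c w}

/-!
For disjoint `A`, `B`, counting neighbourhoods gives
`|Γ(A)| + |Γ(B)| = |Γ(A ∪ B)| + |U(A,B)| + |Γ(B) ∩ A| + |Γ(A) ∩ B|`, hence
`b(A ∪ B) + |U(A,B)| + |Γ(B) ∩ A| + |Γ(A) ∩ B| = b(A) + b(B) + c(A) + c(B) - c(A ∪ B)`.
A component of `G[A]` or `G[B]` with no neighbour on the other side is still a component of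
`G[A ∪ B]`, and every other one contains a vertex of `Γ(B) ∩ A` or `Γ(A) ∩ B`; so
`c(A) + c(B) ≤ c(A ∪ B) + |Γ(B) ∩ A| + |Γ(A) ∩ B|`, strictly if an edge joins `A` and `B`,
since the component of `G[A ∪ B]` through that edge is not one of the former. With
`b(A) = b(B) = 1 ≤ b(A ∪ B)` this leaves `b(A ∪ B) + |U(A,B)| ≤ 2`, resp. `≤ 1` when there
is an edge, while `U(A,B) ≠ ∅` when there is none.
-/

namespace SimpleGraph

variable {V : Type*} (G : SimpleGraph V)

abbrev induceComponentMap {s t : Set V} (h : s ⊆ t) :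
    (G.induce s).ConnectedComponent → (G.induce t).ConnectedComponent :=
  ConnectedComponent.map (G.induceHomOfLE h).toHom

variable {G}

/-- A component of `G[s]` with no neighbour in `t \ s` is still a whole component of `G[t]`. -/
theorem exists_mem_of_induceComponentMap_eq {s t : Set V} (h : s ⊆ t)
    {C : (G.induce s).ConnectedComponent} (hC : ∀ v ∈ C.supp, ∀ w ∈ t \ s, ¬G.Adj v w)
    {w : t} (hw : G.induceComponentMap h C = (G.induce t).connectedComponentMk w) :
    ∃ hws : (w : V) ∈ s, (G.induce s).connectedComponentMk ⟨w, hws⟩ = C := by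
  obtain ⟨u, rfl⟩ := C.exists_rep
  obtain ⟨p⟩ := ConnectedComponent.exact hw
  by_contra hne
  obtain ⟨d, -, ⟨hxs, hx⟩, hy⟩ := p.exists_boundary_dart
    {x | ∃ hx : (x : V) ∈ s, (G.induce s).connectedComponentMk ⟨x, hx⟩ =
      (G.induce s).connectedComponentMk u} ⟨u.2, rfl⟩ hne
  by_cases hys : (d.snd : V) ∈ s
  · refine hy ⟨hys, Eq.trans ?_ hx⟩
    exact (ConnectedComponent.connectedComponentMk_eq_of_adj
      (show (G.induce s).Adj ⟨d.fst, hxs⟩ ⟨d.snd, hys⟩ from d.adj)).symm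
  · exact hC ⟨d.fst, hxs⟩ hx d.snd ⟨d.snd.2, hys⟩ d.adj

end SimpleGraph

section DisjointUnion

open SimpleGraph

variable {V : Type*} (G : SimpleGraph V)

def avoidingComponents (A B : Finset V) : Set (G.induce (A : Set V)).ConnectedComponent :=
  {C | ∀ v ∈ C.supp, (v : V) ∉ openNbhd G B}

def avoidingComponentsToUnion [DecidableEq V] (A B : Finset V) :
    avoidingComponents G A B ⊕ avoidingComponents G B A →
      (G.induce ((A ∪ B : Finset V) : Set V)).ConnectedComponent :=
  Sum.elim (fun C => G.induceComponentMap (Finset.coe_subset.mpr Finset.subset_union_left) C)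
    (fun D => G.induceComponentMap (Finset.coe_subset.mpr Finset.subset_union_right) D)

variable {G}

theorem numComponents_le_card_avoidingComponents_add (A B : Finset V) :
    numComponents G A ≤ Nat.card (avoidingComponents G A B) + (openNbhd G B ∩ A).ncard := by
  have : Finite ↥(openNbhd G B ∩ A) := (A.finite_toSet.inter_of_right _).to_subtype
  have hsurj : Function.Surjective fun v : ↥(openNbhd G B ∩ A) =>
      (⟨(G.induce (A : Set V)).connectedComponentMk ⟨v, v.2.2⟩, fun h => h _ rfl v.2.1⟩ :
        ↥(avoidingComponents G A B)ᶜ) := by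
    rintro ⟨C, hC⟩
    obtain ⟨v, hvC, hv⟩ : ∃ v ∈ C.supp, (v : V) ∈ openNbhd G B := by
      simpa [avoidingComponents] using hC
    exact ⟨⟨v, hv, v.2⟩, Subtype.ext hvC⟩
  calc numComponents G A
      = (avoidingComponents G A B).ncard + (avoidingComponents G A B)ᶜ.ncard :=
        (Set.ncard_add_ncard_compl _).symm
    _ ≤ _ := Nat.add_le_add_left (Nat.card_le_card_of_surjective _ hsurj) _

variable [DecidableEq V] {A B W : Finset V}

theorem exists_mem_of_induceComponentMap_eq_of_avoiding (hAB : Disjoint A B)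
    (hAW : A ⊆ W) (hW : W ⊆ A ∪ B) {C : (G.induce (A : Set V)).ConnectedComponent}
    (hC : C ∈ avoidingComponents G A B) {w : (W : Set V)}
    (hw : G.induceComponentMap (Finset.coe_subset.mpr hAW) C =
      (G.induce (W : Set V)).connectedComponentMk w) :
    ∃ hwA : (w : V) ∈ A, (G.induce (A : Set V)).connectedComponentMk ⟨w, hwA⟩ = C := by
  refine exists_mem_of_induceComponentMap_eq _ (fun v hv x hx hadj => hC v hv ?_) hw
  have hxB : x ∈ B := (Finset.mem_union.mp (hW hx.1)).resolve_left hx.2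
  exact ⟨Finset.disjoint_left.mp hAB v.2, x, hxB, hadj.symm⟩

theorem eq_of_induceComponentMap_eq (hAB : Disjoint A B) (hAW : A ⊆ W) (hW : W ⊆ A ∪ B)
    {C : (G.induce (A : Set V)).ConnectedComponent} (hC : C ∈ avoidingComponents G A B)
    (C' : (G.induce (A : Set V)).ConnectedComponent)
    (h : G.induceComponentMap (Finset.coe_subset.mpr hAW) C =
      G.induceComponentMap (Finset.coe_subset.mpr hAW) C') : C = C' := by
  obtain ⟨w, rfl⟩ := C'.exists_rep
  obtain ⟨_, hw⟩ := exists_mem_of_induceComponentMap_eq_of_avoiding hAB hAW hW hC h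
  exact hw.symm

theorem induceComponentMap_ne_of_disjoint (hAB : Disjoint A B) (hAW : A ⊆ W) (hBW : B ⊆ W)
    (hW : W ⊆ A ∪ B) {C : (G.induce (A : Set V)).ConnectedComponent}
    (hC : C ∈ avoidingComponents G A B) (D : (G.induce (B : Set V)).ConnectedComponent) :
    G.induceComponentMap (Finset.coe_subset.mpr hAW) C ≠
      G.induceComponentMap (Finset.coe_subset.mpr hBW) D := by
  obtain ⟨w, rfl⟩ := D.exists_rep
  intro h
  obtain ⟨hwA, -⟩ := exists_mem_of_induceComponentMap_eq_of_avoiding hAB hAW hW hC h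
  exact Finset.disjoint_left.mp hAB hwA w.2

theorem induceComponentMap_ne_mk_of_mem_openNbhd (hAB : Disjoint A B) (hAW : A ⊆ W)
    (hW : W ⊆ A ∪ B) {C : (G.induce (A : Set V)).ConnectedComponent}
    (hC : C ∈ avoidingComponents G A B) {a : V} (ha : a ∈ A) (haB : a ∈ openNbhd G B) :
    G.induceComponentMap (Finset.coe_subset.mpr hAW) C ≠
      (G.induce (W : Set V)).connectedComponentMk ⟨a, hAW ha⟩ := by
  intro h
  obtain ⟨_, hw⟩ := exists_mem_of_induceComponentMap_eq_of_avoiding hAB hAW hW hC h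
  exact hC ⟨a, ha⟩ hw haB

theorem avoidingComponentsToUnion_injective (hAB : Disjoint A B) :
    Function.Injective (avoidingComponentsToUnion G A B) := by
  refine Function.Injective.sumElim (fun C C' h => Subtype.ext ?_) (fun D D' h => Subtype.ext ?_)
    fun C D => induceComponentMap_ne_of_disjoint hAB Finset.subset_union_left
      Finset.subset_union_right subset_rfl C.2 D.1
  · exact eq_of_induceComponentMap_eq hAB Finset.subset_union_left subset_rfl C.2 C'.1 h
  · exact eq_of_induceComponentMap_eq hAB.symm Finset.subset_union_right
      (Finset.union_comm A B).subset D.2 D'.1 h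

theorem avoidingComponentsToUnion_ne_mk_of_adj (hAB : Disjoint A B) {a b : V} (ha : a ∈ A)
    (hb : b ∈ B) (hadj : G.Adj a b) (x : avoidingComponents G A B ⊕ avoidingComponents G B A) :
    avoidingComponentsToUnion G A B x ≠
      (G.induce ((A ∪ B : Finset V) : Set V)).connectedComponentMk
        ⟨a, Finset.mem_union_left B ha⟩ := by
  rcases x with C | D
  · exact induceComponentMap_ne_mk_of_mem_openNbhd hAB Finset.subset_union_left subset_rfl C.2
      ha ⟨Finset.disjoint_left.mp hAB ha, b, hb, hadj.symm⟩
  · rw [ConnectedComponent.connectedComponentMk_eq_of_adj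
      (show (G.induce ((A ∪ B : Finset V) : Set V)).Adj ⟨a, Finset.mem_union_left B ha⟩
        ⟨b, Finset.mem_union_right A hb⟩ from hadj)]
    exact induceComponentMap_ne_mk_of_mem_openNbhd hAB.symm Finset.subset_union_right
      (Finset.union_comm A B).subset D.2 hb ⟨Finset.disjoint_right.mp hAB hb, a, ha, hadj⟩

theorem card_avoidingComponents_add_le (hAB : Disjoint A B) :
    Nat.card (avoidingComponents G A B) + Nat.card (avoidingComponents G B A) ≤
      numComponents G (A ∪ B) := by
  rw [← Nat.card_sum]
  exact Nat.card_le_card_of_injective _ (avoidingComponentsToUnion_injective hAB)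

theorem card_avoidingComponents_add_lt_of_adj (hAB : Disjoint A B) {a b : V} (ha : a ∈ A)
    (hb : b ∈ B) (hadj : G.Adj a b) :
    Nat.card (avoidingComponents G A B) + Nat.card (avoidingComponents G B A) <
      numComponents G (A ∪ B) := by
  rw [← Nat.card_sum]
  calc _ ≤ Nat.card {c // c ≠ (G.induce ((A ∪ B : Finset V) : Set V)).connectedComponentMk
          ⟨a, Finset.mem_union_left B ha⟩} :=
        Nat.card_le_card_of_injective
          (fun x => ⟨_, avoidingComponentsToUnion_ne_mk_of_adj hAB ha hb hadj x⟩)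
          fun x y h => avoidingComponentsToUnion_injective hAB (congrArg Subtype.val h)
    _ < numComponents G (A ∪ B) := Finite.card_subtype_lt (not_not.mpr rfl)

theorem openNbhd_union : openNbhd G (A ∪ B) = (openNbhd G A \ B) ∪ (openNbhd G B \ A) := by
  ext v
  simp only [openNbhd, Set.mem_union, Set.mem_sdiff, Set.mem_ofPred_eq, Finset.mem_coe,
    Finset.mem_union, or_and_right, exists_or]
  grind

theorem Uset_eq_inter (hAB : Disjoint A B) :
    Uset G A B = (openNbhd G A \ B) ∩ (openNbhd G B \ A) := by
  have := Finset.disjoint_left.mp hAB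
  ext v
  simp only [Uset, openNbhd, Set.mem_inter_iff, Set.mem_sdiff, Set.mem_ofPred_eq, Finset.mem_coe,
    Finset.mem_union, Finset.mem_sdiff, Finset.mem_inter]
  grind

theorem ncard_openNbhd_add_ncard_openNbhd [Finite V] (hAB : Disjoint A B) :
    (openNbhd G A).ncard + (openNbhd G B).ncard = (openNbhd G (A ∪ B)).ncard +
      (Uset G A B).ncard + (openNbhd G B ∩ A).ncard + (openNbhd G A ∩ B).ncard := by
  have hA := Set.ncard_inter_add_ncard_sdiff_eq_ncard (openNbhd G A) B
  have hB := Set.ncard_inter_add_ncard_sdiff_eq_ncard (openNbhd G B) A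
  have hAB' := Set.ncard_union_add_ncard_inter (openNbhd G A \ B) (openNbhd G B \ A)
  rw [openNbhd_union, Uset_eq_inter hAB]
  omega

theorem numComponents_add_le (hAB : Disjoint A B) :
    numComponents G A + numComponents G B ≤
      numComponents G (A ∪ B) + (openNbhd G B ∩ A).ncard + (openNbhd G A ∩ B).ncard := by
  have hA := numComponents_le_card_avoidingComponents_add (G := G) A B
  have hB := numComponents_le_card_avoidingComponents_add (G := G) B A
  have := card_avoidingComponents_add_le (G := G) hAB
  omega

theorem numComponents_add_lt_of_adj (hAB : Disjoint A B) {a b : V} (ha : a ∈ A) (hb : b ∈ B)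
    (hadj : G.Adj a b) :
    numComponents G A + numComponents G B <
      numComponents G (A ∪ B) + (openNbhd G B ∩ A).ncard + (openNbhd G A ∩ B).ncard := by
  have hA := numComponents_le_card_avoidingComponents_add (G := G) A B
  have hB := numComponents_le_card_avoidingComponents_add (G := G) B A
  have := card_avoidingComponents_add_lt_of_adj hAB ha hb hadj
  omega

theorem bFun_union [Finite V] (f : V → ℤ) (hAB : Disjoint A B) :
    bFun G f (A ∪ B) + (Uset G A B).ncard + (openNbhd G B ∩ A).ncard +
        (openNbhd G A ∩ B).ncard + numComponents G (A ∪ B) =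
      bFun G f A + bFun G f B + numComponents G A + numComponents G B := by
  have := ncard_openNbhd_add_ncard_openNbhd (G := G) hAB
  simp only [bFun, Nat.card_coe_set_eq, Finset.card_union_of_disjoint hAB, Finset.sum_union hAB]
  push_cast
  omega

end DisjointUnion

theorem tight_disjoint_general
    {V : Type*} [Fintype V] [DecidableEq V] (G : SimpleGraph V) (S : Finset V)
    (f : V → ℤ)
    (hcond : ∀ X : Finset V, X ⊆ S → X.Nonempty → 1 ≤ bFun G f X)
    (A B : Finset V) (hA : A ⊆ S) (hB : B ⊆ S)
    (hdisj : Disjoint A B)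
    (htA : bFun G f A = 1) (htB : bFun G f B = 1)
    (hlink : (Uset G A B).Nonempty ∨ ∃ a ∈ A, ∃ b ∈ B, G.Adj a b) :
    bFun G f (A ∪ B) = 1 ∧
      ((Nat.card (Uset G A B) = 1 ∧ ¬ ∃ a ∈ A, ∃ b ∈ B, G.Adj a b) ∨
        Uset G A B = ∅) := by
  have hne : (A ∪ B).Nonempty := by
    obtain ⟨-, -, ⟨a, ha, -⟩, -⟩ | ⟨a, ha, -⟩ := hlink
    exacts [⟨a, Finset.mem_union_left _ (Finset.mem_sdiff.mp ha).1⟩,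
      ⟨a, Finset.mem_union_left _ ha⟩]
  have hpos := hcond (A ∪ B) (Finset.union_subset hA hB) hne
  have hsum := bFun_union (G := G) f hdisj
  rw [htA, htB] at hsum
  rw [Nat.card_coe_set_eq]
  by_cases hedge : ∃ a ∈ A, ∃ b ∈ B, G.Adj a b
  · obtain ⟨a, ha, b, hb, hadj⟩ := hedge
    have := numComponents_add_lt_of_adj hdisj ha hb hadj
    exact ⟨by omega, Or.inr ((Set.ncard_eq_zero).mp (by omega))⟩
  · have hU := (Set.ncard_pos).mpr (hlink.resolve_right hedge)
    have := numComponents_add_le (G := G) hdisj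
    exact ⟨by omega, Or.inl ⟨by omega, hedge⟩⟩

/-- Union of disjoint tight sets connected by an edge or a `U`-vertex is tight;
moreover either `|U(A,B)| = 1` and no edge connects `A` to `B`, or
`U(A,B) = ∅`. -/
theorem tight_disjoint
    {V : Type*} [Fintype V] [DecidableEq V] (G : SimpleGraph V) (S : Finset V)
    (f : V → ℤ) (hf : ∀ v ∈ S, 2 ≤ f v)
    (hcog : IsCograph (G.induce (S : Set V)))
    (hcond : ∀ X : Finset V, X ⊆ S → X.Nonempty → 1 ≤ bFun G f X)
    (A B : Finset V) (hA : A ⊆ S) (hB : B ⊆ S)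
    (hAne : A.Nonempty) (hBne : B.Nonempty) (hdisj : Disjoint A B)
    (htA : bFun G f A = 1) (htB : bFun G f B = 1)
    (hlink : (Uset G A B).Nonempty ∨ ∃ a ∈ A, ∃ b ∈ B, G.Adj a b) :
    bFun G f (A ∪ B) = 1 ∧
      ((Nat.card (Uset G A B) = 1 ∧ ¬ ∃ a ∈ A, ∃ b ∈ B, G.Adj a b) ∨
        Uset G A B = ∅) :=
  tight_disjoint_general G S f hcond A B hA hB hdisj htA htB hlink
end

section
/- Let G be the graph with vertices v₁, v₂, v₃, v₄, a, b, where v₁v₂v₃v₄ is an induced path P₄, a is adjacent to v₁ and v₄, and b is adjacent to v₂ and v₃ (and there are no other edges). Let S = {v₁, v₂, v₃, v₄} and f ≡ 2 on S. Then every nonempty X ⊆ S satisfies |Γ_G(X)| + 2|X| − c_G(X) > Σ_{x∈X} f(x), yet G has no forest subgraph F with d_F(vᵢ) ≥ 2 for all i. -/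
/-- The Egawa–Ozeki counterexample graph: a `P₄` `v₁v₂v₃v₄` (vertices `0,1,2,3`)
together with `a` (vertex `4`) adjacent to `v₁, v₄` and `b` (vertex `5`)
adjacent to `v₂, v₃`. -/
def EOGraph : SimpleGraph (Fin 6) :=
  SimpleGraph.fromEdgeSet
    {s(0, 1), s(1, 2), s(2, 3), s(0, 4), s(3, 4), s(1, 5), s(2, 5)}

lemma eo_adj (a b : Fin 6) : EOGraph.Adj a b ↔
    ((a,b) ∈ [((0:Fin 6),(1:Fin 6)),(1,2),(2,3),(0,4),(3,4),(1,5),(2,5),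
      (1,0),(2,1),(3,2),(4,0),(4,3),(5,1),(5,2)]) := by
  simp only [EOGraph, SimpleGraph.fromEdgeSet_adj, Set.mem_insert_iff,
    Set.mem_singleton_iff, Sym2.eq_iff]
  fin_cases a <;> fin_cases b <;> decide

instance : DecidableRel EOGraph.Adj := fun a b => decidable_of_iff _ (eo_adj a b).symm

lemma card_openNbhd (X N : Finset (Fin 6))
    (h : ∀ v, (v ∉ X ∧ ∃ x ∈ X, EOGraph.Adj x v) ↔ v ∈ N) :
    Nat.card (openNbhd EOGraph X) = N.card := by
  have : openNbhd EOGraph X = ↑N := by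
    ext v; simp only [openNbhd, Set.mem_setOf_eq, Finset.mem_coe]; exact h v
  rw [this, Nat.card_coe_set_eq, Set.ncard_coe_finset]

lemma reach_step {X : Finset (Fin 6)} {v r : Fin 6} (hv : v ∈ X) (hr : r ∈ X)
    (h : EOGraph.Adj v r) :
    (EOGraph.induce (X : Set (Fin 6))).Reachable ⟨v, hv⟩ ⟨r, hr⟩ :=
  SimpleGraph.Adj.reachable h

lemma numComponents_le (G : SimpleGraph (Fin 6)) (X R : Finset (Fin 6)) (hR : R ⊆ X)
    (h : ∀ v, ∀ hv : v ∈ X, ∃ r, ∃ hr : r ∈ R,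
      (G.induce (X : Set (Fin 6))).Reachable ⟨v, hv⟩ ⟨r, hR hr⟩) :
    numComponents G X ≤ R.card := by
  rw [← Set.ncard_coe_finset, ← Nat.card_coe_set_eq]
  apply Nat.card_le_card_of_surjective
    (f := fun r : (R : Set (Fin 6)) =>
      (G.induce (X : Set (Fin 6))).connectedComponentMk ⟨r.1, hR r.2⟩)
  intro c
  obtain ⟨⟨v, hv⟩, rfl⟩ := c.exists_rep
  obtain ⟨r, hr, hreach⟩ := h v hv
  exact ⟨⟨r, hr⟩, (SimpleGraph.ConnectedComponent.sound hreach).symm⟩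

lemma numComponents_le_card (G : SimpleGraph (Fin 6)) (X : Finset (Fin 6)) :
    numComponents G X ≤ X.card :=
  numComponents_le G X X (fun _ h => h) (fun v hv => ⟨v, hv, .refl _⟩)

lemma case_done (X N : Finset (Fin 6)) (k : ℕ)
    (hg : ∀ v, (v ∉ X ∧ ∃ x ∈ X, EOGraph.Adj x v) ↔ v ∈ N)
    (hc : numComponents EOGraph X ≤ k) (hk : k < N.card) :
    (2 * X.card : ℤ) <
      (Nat.card (openNbhd EOGraph X) : ℤ) + 2 * X.card - numComponents EOGraph X := by
  rw [card_openNbhd X N hg]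
  omega

lemma nbhd_small (F : SimpleGraph (Fin 6)) (hF : F ≤ EOGraph) (v c : Fin 6)
    (h : ∀ w, EOGraph.Adj v w → F.Adj v w → w = c) :
    Nat.card (F.neighborSet v) ≤ 1 := by
  rw [Nat.card_coe_set_eq]
  calc (F.neighborSet v).ncard ≤ ({c} : Set (Fin 6)).ncard := by
        apply Set.ncard_le_ncard _ (Set.finite_singleton c)
        intro w hw
        exact h w (hF hw) hw
      _ = 1 := Set.ncard_singleton c

/-- The Egawa–Ozeki characterization fails when `G[S] = P₄`: the condition
`|Γ_G(X)| + 2|X| − c_G(X) > f(X)` holds for every nonempty `X ⊆ S` with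
`f ≡ 2`, yet there is no forest subgraph with all degrees on `S` at least 2. -/
theorem egawa_ozeki_counterexample :
    (∀ X : Finset (Fin 6), X ⊆ ({0, 1, 2, 3} : Finset (Fin 6)) → X.Nonempty →
      (2 * X.card : ℤ) <
        (Nat.card (openNbhd EOGraph X) : ℤ) + 2 * X.card -
          numComponents EOGraph X) ∧
    ¬ ∃ F : SimpleGraph (Fin 6), F ≤ EOGraph ∧ F.IsAcyclic ∧
        ∀ v ∈ ({0, 1, 2, 3} : Finset (Fin 6)),
          2 ≤ Nat.card (F.neighborSet v) := by
  constructor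
  · intro X hX hne
    have hX' : X ∈ ({0,1,2,3} : Finset (Fin 6)).powerset := Finset.mem_powerset.mpr hX
    fin_cases hX'
    -- ∅
    · exact absurd hne (by decide)
    -- {0}
    · exact case_done {0} {1,4} 1 (by decide) (numComponents_le_card _ _) (by decide)
    -- {1}
    · exact case_done {1} {0,2,5} 1 (by decide) (numComponents_le_card _ _) (by decide)
    -- {0,1}
    · exact case_done {0,1} {2,4,5} 2 (by decide) (numComponents_le_card _ _) (by decide)
    -- {2}
    · exact case_done {2} {1,3,5} 1 (by decide) (numComponents_le_card _ _) (by decide)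
    -- {0,2}
    · exact case_done {0,2} {1,3,4,5} 2 (by decide) (numComponents_le_card _ _) (by decide)
    -- {1,2}
    · exact case_done {1,2} {0,3,5} 2 (by decide) (numComponents_le_card _ _) (by decide)
    -- {0,1,2}
    · refine case_done {0,1,2} {3,4,5} 1 (by decide) ?_ (by decide)
      refine numComponents_le EOGraph {0,1,2} {0} (by decide) ?_
      intro v hv
      fin_cases v
      · exact ⟨0, by decide, .refl _⟩
      · exact ⟨0, by decide, reach_step (by decide) (by decide) (by decide)⟩
      · exact ⟨0, by decide, .trans
          (reach_step (by decide) (by decide) (by decide : EOGraph.Adj 2 1))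
          (reach_step (by decide) (by decide) (by decide))⟩
      · exact absurd hv (by decide)
      · exact absurd hv (by decide)
      · exact absurd hv (by decide)
    -- {3}
    · exact case_done {3} {2,4} 1 (by decide) (numComponents_le_card _ _) (by decide)
    -- {0,3}
    · exact case_done {0,3} {1,2,4} 2 (by decide) (numComponents_le_card _ _) (by decide)
    -- {1,3}
    · exact case_done {1,3} {0,2,4,5} 2 (by decide) (numComponents_le_card _ _) (by decide)
    -- {0,1,3}
    · refine case_done {0,1,3} {2,4,5} 2 (by decide) ?_ (by decide)
      refine numComponents_le EOGraph {0,1,3} {0,3} (by decide) ?_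
      intro v hv
      fin_cases v
      · exact ⟨0, by decide, .refl _⟩
      · exact ⟨0, by decide, reach_step (by decide) (by decide) (by decide)⟩
      · exact absurd hv (by decide)
      · exact ⟨3, by decide, .refl _⟩
      · exact absurd hv (by decide)
      · exact absurd hv (by decide)
    -- {2,3}
    · exact case_done {2,3} {1,4,5} 2 (by decide) (numComponents_le_card _ _) (by decide)
    -- {0,2,3}
    · refine case_done {0,2,3} {1,4,5} 2 (by decide) ?_ (by decide)
      refine numComponents_le EOGraph {0,2,3} {0,2} (by decide) ?_
      intro v hv
      fin_cases v
      · exact ⟨0, by decide, .refl _⟩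
      · exact absurd hv (by decide)
      · exact ⟨2, by decide, .refl _⟩
      · exact ⟨2, by decide, reach_step (by decide) (by decide) (by decide)⟩
      · exact absurd hv (by decide)
      · exact absurd hv (by decide)
    -- {1,2,3}
    · refine case_done {1,2,3} {0,4,5} 1 (by decide) ?_ (by decide)
      refine numComponents_le EOGraph {1,2,3} {1} (by decide) ?_
      intro v hv
      fin_cases v
      · exact absurd hv (by decide)
      · exact ⟨1, by decide, .refl _⟩
      · exact ⟨1, by decide, reach_step (by decide) (by decide) (by decide)⟩
      · exact ⟨1, by decide, .trans
          (reach_step (by decide) (by decide) (by decide : EOGraph.Adj 3 2))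
          (reach_step (by decide) (by decide) (by decide))⟩
      · exact absurd hv (by decide)
      · exact absurd hv (by decide)
    -- {0,1,2,3}
    · refine case_done {0,1,2,3} {4,5} 1 (by decide) ?_ (by decide)
      refine numComponents_le EOGraph {0,1,2,3} {0} (by decide) ?_
      intro v hv
      fin_cases v
      · exact ⟨0, by decide, .refl _⟩
      · exact ⟨0, by decide, reach_step (by decide) (by decide) (by decide)⟩
      · exact ⟨0, by decide, .trans
          (reach_step (by decide) (by decide) (by decide : EOGraph.Adj 2 1))
          (reach_step (by decide) (by decide) (by decide))⟩
      · exact ⟨0, by decide, .trans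
          (reach_step (by decide) (by decide) (by decide : EOGraph.Adj 3 2))
          (.trans (reach_step (by decide) (by decide) (by decide : EOGraph.Adj 2 1))
            (reach_step (by decide) (by decide) (by decide)))⟩
      · exact absurd hv (by decide)
      · exact absurd hv (by decide)
  · rintro ⟨F, hF, hA, hdeg⟩
    have h01 : F.Adj 0 1 := by
      by_contra hn
      have h := nbhd_small F hF 0 4 (by
        intro w hw hfw; fin_cases w <;>
          first | rfl | exact absurd hw (by decide) | exact absurd hfw hn)
      have := hdeg 0 (by decide); omega
    have h04 : F.Adj 0 4 := by
      by_contra hn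
      have h := nbhd_small F hF 0 1 (by
        intro w hw hfw; fin_cases w <;>
          first | rfl | exact absurd hw (by decide) | exact absurd hfw hn)
      have := hdeg 0 (by decide); omega
    have h23 : F.Adj 2 3 := by
      by_contra hn
      have h := nbhd_small F hF 3 4 (by
        intro w hw hfw; fin_cases w <;>
          first | rfl | exact absurd hw (by decide)
                | exact absurd hfw (fun h => hn h.symm))
      have := hdeg 3 (by decide); omega
    have h34 : F.Adj 3 4 := by
      by_contra hn
      have h := nbhd_small F hF 3 2 (by
        intro w hw hfw; fin_cases w <;>
          first | rfl | exact absurd hw (by decide) | exact absurd hfw hn)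
      have := hdeg 3 (by decide); omega
    have h1 : F.Adj 1 2 ∨ F.Adj 1 5 := by
      by_contra hn
      push_neg at hn
      have h := nbhd_small F hF 1 0 (by
        intro w hw hfw; fin_cases w <;>
          first | rfl | exact absurd hw (by decide)
                | exact absurd hfw hn.1 | exact absurd hfw hn.2)
      have := hdeg 1 (by decide); omega
    have h2 : F.Adj 1 2 ∨ F.Adj 2 5 := by
      by_contra hn
      push_neg at hn
      have h := nbhd_small F hF 2 3 (by
        intro w hw hfw; fin_cases w <;>
          first | rfl | exact absurd hw (by decide)
                | exact absurd hfw (fun h => hn.1 h.symm) | exact absurd hfw hn.2)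
      have := hdeg 2 (by decide); omega
    by_cases h12 : F.Adj 1 2
    · exact hA (SimpleGraph.Walk.cons h01 (.cons h12 (.cons h23 (.cons h34
        (.cons h04.symm .nil))))) (by
          simp [SimpleGraph.Walk.isCycle_def, SimpleGraph.Walk.isTrail_def])
    · obtain h15 := h1.resolve_left h12
      obtain h25 := h2.resolve_left h12
      exact hA (SimpleGraph.Walk.cons h01 (.cons h15 (.cons h25.symm (.cons h23
        (.cons h34 (.cons h04.symm .nil)))))) (by
          simp [SimpleGraph.Walk.isCycle_def, SimpleGraph.Walk.isTrail_def])
end
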